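/- arXiv:2012.07404 — 4 statements merged into one kernel-verified Lean document; each statement's English description precedes it below -/
import Mathlib

section
/- The Lie derivative of the contact form along the Hamiltonian vector field is conformal: 𝓛_{X_f} η = -R(f)·η; while along the evolution vector field 𝓛_{𝓔_f} η = -R(f)·η + df. -/
/- Canonical (Darboux) model of a contact manifold: ℝ^{2n+1} with coordinates
   (q, p, S), contact form η = dS - pᵢ dqⁱ.  The evolution vector field of f is
   𝓔_f = ♯_Λ(df), with components (∂f/∂pᵢ, -(∂f/∂qⁱ + pᵢ ∂f/∂S), pᵢ ∂f/∂pᵢ). -/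

noncomputable section

abbrev Pt (n : ℕ) := (Fin n → ℝ) × (Fin n → ℝ) × ℝ

/-- ∂f/∂qⁱ -/
noncomputable def pdq {n : ℕ} (f : Pt n → ℝ) (x : Pt n) (i : Fin n) : ℝ :=
  fderiv ℝ f x ((Pi.single i 1, 0, 0) : Pt n)

/-- ∂f/∂pᵢ -/
noncomputable def pdp {n : ℕ} (f : Pt n → ℝ) (x : Pt n) (i : Fin n) : ℝ :=
  fderiv ℝ f x ((0, Pi.single i 1, 0) : Pt n)

/-- ∂f/∂S -/
noncomputable def pdS {n : ℕ} (f : Pt n → ℝ) (x : Pt n) : ℝ :=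
  fderiv ℝ f x ((0, 0, 1) : Pt n)

/-- The contact Hamiltonian vector field X_f. -/
noncomputable def ham {n : ℕ} (f : Pt n → ℝ) (x : Pt n) : Pt n :=
  (fun i => pdp f x i,
   fun i => -(pdq f x i + x.2.1 i * pdS f x),
   (∑ i, x.2.1 i * pdp f x i) - f x)

/-- The evolution vector field 𝓔_f = X_f + f·R. -/
noncomputable def evol {n : ℕ} (f : Pt n → ℝ) (x : Pt n) : Pt n :=
  (fun i => pdp f x i,
   fun i => -(pdq f x i + x.2.1 i * pdS f x),
   ∑ i, x.2.1 i * pdp f x i)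

/-- The contact form η = dS - pᵢ dqⁱ evaluated at x on a tangent vector v. -/
noncomputable def eta {n : ℕ} (x v : Pt n) : ℝ :=
  v.2.2 - ∑ i, x.2.1 i * v.1 i

/-- dη = Σ dqⁱ ∧ dpᵢ evaluated on a pair of tangent vectors. -/
noncomputable def deta {n : ℕ} (u v : Pt n) : ℝ :=
  ∑ i, (u.1 i * v.2.1 i - u.2.1 i * v.1 i)


lemma clm_decomp {n : ℕ} (L : Pt n →L[ℝ] ℝ) (v : Pt n) :
    L v = (∑ i, v.1 i * L ((Pi.single i 1, 0, 0) : Pt n))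
        + (∑ i, v.2.1 i * L ((0, Pi.single i 1, 0) : Pt n))
        + v.2.2 * L ((0, 0, 1) : Pt n) := by
  have hv : v = (∑ i, v.1 i • (((Pi.single i 1 : Fin n → ℝ), 0, 0) : Pt n))
      + (∑ i, v.2.1 i • (((0 : Fin n → ℝ), (Pi.single i 1 : Fin n → ℝ), 0) : Pt n))
      + v.2.2 • (((0 : Fin n → ℝ), (0 : Fin n → ℝ), 1) : Pt n) := by
    refine Prod.ext ?_ (Prod.ext ?_ ?_)
    · simp only [Prod.fst_add, Prod.fst_sum, Prod.smul_fst, smul_zero, Finset.sum_const_zero,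
        add_zero, zero_add]
      funext j
      simp [Finset.sum_apply, Pi.single_apply]
    · simp only [Prod.snd_add, Prod.fst_add, Prod.snd_sum, Prod.fst_sum, Prod.smul_snd,
        Prod.smul_fst, smul_zero, Finset.sum_const_zero, add_zero, zero_add]
      funext j
      simp [Finset.sum_apply, Pi.single_apply]
    · simp [Prod.snd_sum]
  conv_lhs => rw [hv]
  simp only [map_add, map_sum, map_smul, smul_eq_mul]

/-- Via Cartan's magic formula 𝓛_X η = d(i_X η) + i_X dη:
    𝓛_{X_f} η = -R(f)·η, while 𝓛_{𝓔_f} η = -R(f)·η + df. -/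
theorem lie_derivative_contact_form {n : ℕ} (f : Pt n → ℝ) (hf : ContDiff ℝ (⊤ : ℕ∞) f) :
    (∀ (x v : Pt n),
        fderiv ℝ (fun y => eta y (ham f y)) x v + deta (ham f x) v
          = -(pdS f x) * eta x v) ∧
    (∀ (x v : Pt n),
        fderiv ℝ (fun y => eta y (evol f y)) x v + deta (evol f x) v
          = -(pdS f x) * eta x v + fderiv ℝ f x v) := by
  have key : ∀ (x v : Pt n), deta (ham f x) v
      = fderiv ℝ f x v - v.2.2 * pdS f x + pdS f x * ∑ i, x.2.1 i * v.1 i := by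
    intro x v
    rw [clm_decomp (fderiv ℝ f x) v]
    simp only [deta, ham, Finset.mul_sum]
    have hrhs : (∑ i, v.1 i * (fderiv ℝ f x) ((Pi.single i 1, 0, 0) : Pt n)
          + ∑ i, v.2.1 i * (fderiv ℝ f x) ((0, Pi.single i 1, 0) : Pt n)
          + v.2.2 * (fderiv ℝ f x) ((0, 0, 1) : Pt n))
          - v.2.2 * pdS f x + ∑ i, pdS f x * (x.2.1 i * v.1 i)
        = ∑ i, (v.1 i * pdq f x i + v.2.1 i * pdp f x i + pdS f x * (x.2.1 i * v.1 i)) := by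
      rw [Finset.sum_add_distrib, Finset.sum_add_distrib]
      simp only [pdq, pdp, pdS]
      ring
    rw [hrhs]
    refine Finset.sum_congr rfl fun i _ => ?_
    ring
  constructor
  · intro x v
    have h1 : (fun y => eta y (ham f y)) = fun y => -(f y) := by
      funext y
      simp only [eta, ham]
      ring
    rw [h1, fderiv_fun_neg]
    rw [key x v]
    simp only [eta, ContinuousLinearMap.neg_apply]
    ring
  · intro x v
    have h1 : (fun y => eta y (evol f y)) = fun _ => (0 : ℝ) := by
      funext y
      simp only [eta, evol]
      ring
    have h2 : deta (evol f x) v = deta (ham f x) v := rfl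
    rw [h1, h2, fderiv_fun_const, key x v]
    simp only [eta, ContinuousLinearMap.zero_apply, Pi.zero_apply]
    ring
end
end

section
/- A curve (q(t), q̇(t), S(t)) is an integral curve of the Lagrangian evolution vector field Γ_L = ♯_{Λ_L}(dE_L) if and only if it satisfies the thermodynamic Herglotz equations: d/dt(∂L/∂q̇ⁱ) - ∂L/∂qⁱ = (∂L/∂q̇ⁱ)(∂L/∂S) and Ṡ = q̇ⁱ ∂L/∂q̇ⁱ, together with the second-order condition dqⁱ/dt = q̇ⁱ. -/
/- Canonical (Darboux) model of a contact manifold: ℝ^{2n+1} with coordinates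
   (q, p, S), contact form η = dS - pᵢ dqⁱ.  The evolution vector field of f is
   𝓔_f = ♯_Λ(df), with components (∂f/∂pᵢ, -(∂f/∂qⁱ + pᵢ ∂f/∂S), pᵢ ∂f/∂pᵢ). -/

noncomputable section

/- Here Pt n carries Lagrangian coordinates (qⁱ, q̇ⁱ, S); `pdp` is ∂/∂q̇ⁱ. -/

/-- The Hessian W_{ij} = ∂²L/∂q̇ⁱ∂q̇ʲ. -/
noncomputable def Wmat {n : ℕ} (L : Pt n → ℝ) (x : Pt n) : Matrix (Fin n) (Fin n) ℝ :=
  fun i j => fderiv ℝ (fun y => pdp L y i) x ((0, Pi.single j 1, 0) : Pt n)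

/-- The mixed second partial ∂²L/∂q̇ⁱ∂S. -/
noncomputable def WS {n : ℕ} (L : Pt n → ℝ) (x : Pt n) (i : Fin n) : ℝ :=
  fderiv ℝ (fun y => pdp L y i) x ((0, 0, 1) : Pt n)

/-- The contact form η_L = dS - (∂L/∂q̇ⁱ) dqⁱ evaluated on a tangent vector v. -/
noncomputable def etaLv {n : ℕ} (L : Pt n → ℝ) (x v : Pt n) : ℝ :=
  v.2.2 - ∑ i, pdp L x i * v.1 i

/-- dη_L = Σ dqⁱ ∧ d(∂L/∂q̇ⁱ) evaluated on a pair of tangent vectors. -/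
noncomputable def detaL {n : ℕ} (L : Pt n → ℝ) (x u v : Pt n) : ℝ :=
  ∑ i, (u.1 i * fderiv ℝ (fun y => pdp L y i) x v
        - fderiv ℝ (fun y => pdp L y i) x u * v.1 i)

/-- The candidate Reeb field 𝓡_L = ∂/∂S - W^{ij}(∂²L/∂q̇ʲ∂S) ∂/∂q̇ⁱ. -/
noncomputable def ReebL {n : ℕ} (L : Pt n → ℝ) (Winv : Pt n → Matrix (Fin n) (Fin n) ℝ)
    (x : Pt n) : Pt n :=
  (0, fun i => -(∑ j, Winv x i j * WS L x j), 1)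


/-- The energy E_L = q̇ⁱ ∂L/∂q̇ⁱ - L. -/
noncomputable def EL {n : ℕ} (L : Pt n → ℝ) (x : Pt n) : ℝ :=
  (∑ i, x.2.1 i * pdp L x i) - L x

variable {n : ℕ}

noncomputable def pcoord (i : Fin n) : Pt n →L[ℝ] ℝ :=
  (ContinuousLinearMap.proj i).comp
    ((ContinuousLinearMap.fst ℝ (Fin n → ℝ) ℝ).comp
      (ContinuousLinearMap.snd ℝ (Fin n → ℝ) ((Fin n → ℝ) × ℝ)))

lemma contDiff_pdp (L : Pt n → ℝ) (hL : ContDiff ℝ (⊤ : ℕ∞) L) (i : Fin n) :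
    ContDiff ℝ (⊤ : ℕ∞) (fun y => pdp L y i) :=
  (hL.fderiv_right le_rfl).clm_apply contDiff_const

lemma hasFDerivAt_EL (L : Pt n → ℝ) (hL : ContDiff ℝ (⊤ : ℕ∞) L) (x : Pt n) :
    HasFDerivAt (EL L)
      ((∑ i, (x.2.1 i • fderiv ℝ (fun y => pdp L y i) x + pdp L x i • pcoord i))
        - fderiv ℝ L x) x := by
  have hp : ∀ i, HasFDerivAt (fun y => pdp L y i)
      (fderiv ℝ (fun y => pdp L y i) x) x :=
    fun i => ((contDiff_pdp L hL i).differentiable (by simp) x).hasFDerivAt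
  have h1 : ∀ i ∈ Finset.univ, HasFDerivAt (fun y : Pt n => y.2.1 i * pdp L y i)
      (x.2.1 i • fderiv ℝ (fun y => pdp L y i) x + pdp L x i • pcoord i) x :=
    fun i _ => (pcoord i).hasFDerivAt.mul (hp i)
  exact (HasFDerivAt.fun_sum h1).sub (hL.differentiable (by simp) x).hasFDerivAt

lemma fderiv_EL_apply (L : Pt n → ℝ) (hL : ContDiff ℝ (⊤ : ℕ∞) L) (x u : Pt n) :
    fderiv ℝ (EL L) x u
      = (∑ i, (x.2.1 i * fderiv ℝ (fun y => pdp L y i) x u + pdp L x i * u.2.1 i))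
        - fderiv ℝ L x u := by
  rw [(hasFDerivAt_EL L hL x).fderiv]
  simp [pcoord, ContinuousLinearMap.sum_apply, smul_eq_mul]

lemma pt_decomp (u : Pt n) :
    u = (∑ j, u.1 j • ((Pi.single j 1, 0, 0) : Pt n))
      + (∑ j, u.2.1 j • ((0, Pi.single j 1, 0) : Pt n))
      + u.2.2 • ((0, 0, 1) : Pt n) := by
  have h1 : ∀ (d : Fin n → ℝ), d = ∑ j, d j • (Pi.single j 1 : Fin n → ℝ) := by
    intro d; funext k
    simp [Finset.sum_apply, Pi.single_apply, mul_comm]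
  refine Prod.ext ?_ (Prod.ext ?_ ?_) <;>
    simp [Prod.fst_sum, Prod.snd_sum, Finset.sum_apply] <;> exact h1 _

lemma fderiv_eval (g : Pt n → ℝ) (x u : Pt n) :
    fderiv ℝ g x u
      = (∑ j, u.1 j * pdq g x j) + (∑ j, u.2.1 j * pdp g x j) + u.2.2 * pdS g x := by
  conv_lhs => rw [pt_decomp u]
  simp only [map_add, map_sum, map_smul, smul_eq_mul, pdq, pdp, pdS]

lemma row_cancel (W Wi : Matrix (Fin n) (Fin n) ℝ) (h : W * Wi = 1) (d : Fin n → ℝ)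
    (hd : ∀ j, ∑ i, d i * W i j = 0) : d = 0 := by
  funext k
  have h1 : d k = ∑ i, d i * (W * Wi) i k := by
    rw [h]; simp [Matrix.one_apply]
  rw [h1]
  simp only [Matrix.mul_apply, Finset.mul_sum]
  rw [Finset.sum_comm]
  calc ∑ j, ∑ i, d i * (W i j * Wi j k)
      = ∑ j, (∑ i, d i * W i j) * Wi j k := by
        refine Finset.sum_congr rfl fun j _ => ?_
        rw [Finset.sum_mul]; exact Finset.sum_congr rfl fun i _ => by ring
    _ = 0 := by simp [hd]

lemma col_cancel (W Wi : Matrix (Fin n) (Fin n) ℝ) (h : Wi * W = 1) (d : Fin n → ℝ)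
    (hd : ∀ i, ∑ j, W i j * d j = 0) : d = 0 := by
  funext k
  have h1 : d k = ∑ j, (Wi * W) k j * d j := by
    rw [h]; simp [Matrix.one_apply]
  rw [h1]
  simp only [Matrix.mul_apply, Finset.sum_mul]
  rw [Finset.sum_comm]
  calc ∑ j, ∑ i, Wi k j * W j i * d i
      = ∑ j, Wi k j * (∑ i, W j i * d i) := by
        refine Finset.sum_congr rfl fun j _ => ?_
        rw [Finset.mul_sum]; exact Finset.sum_congr rfl fun i _ => by ring
    _ = 0 := by simp [hd]

lemma Dp_reeb (L : Pt n → ℝ) (Winv : Pt n → Matrix (Fin n) (Fin n) ℝ)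
    (x : Pt n) (hW : Wmat L x * Winv x = 1) (i : Fin n) :
    fderiv ℝ (fun y => pdp L y i) x (ReebL L Winv x) = 0 := by
  rw [fderiv_eval]
  have hw : ∀ j, pdp (fun y => pdp L y i) x j = Wmat L x i j := fun j => rfl
  have hws : pdS (fun y => pdp L y i) x = WS L x i := rfl
  simp only [ReebL, Pi.zero_apply, zero_mul, Finset.sum_const_zero, one_mul, zero_add, hw, hws]
  have h1 : ∀ k, ∑ j, Wmat L x i j * Winv x j k = (1 : Matrix (Fin n) (Fin n) ℝ) i k := by
    intro k; rw [← Matrix.mul_apply, hW]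
  have key : ∀ j, (-(∑ k, Winv x j k * WS L x k)) * Wmat L x i j
      = ∑ k, -(Wmat L x i j * Winv x j k * WS L x k) := by
    intro j
    rw [neg_mul, Finset.sum_mul, ← Finset.sum_neg_distrib]
    exact Finset.sum_congr rfl fun k _ => by ring
  rw [Finset.sum_congr rfl fun j _ => key j, Finset.sum_comm]
  have key2 : ∀ k, ∑ j, -(Wmat L x i j * Winv x j k * WS L x k)
      = -((1 : Matrix (Fin n) (Fin n) ℝ) i k * WS L x k) := by
    intro k
    rw [Finset.sum_neg_distrib, ← Finset.sum_mul, h1]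
  rw [Finset.sum_congr rfl fun k _ => key2 k]
  simp [Matrix.one_apply]

lemma fderiv_EL_reeb (L : Pt n → ℝ) (hL : ContDiff ℝ (⊤ : ℕ∞) L)
    (Winv : Pt n → Matrix (Fin n) (Fin n) ℝ) (x : Pt n)
    (hW : Wmat L x * Winv x = 1) :
    fderiv ℝ (EL L) x (ReebL L Winv x) = -(pdS L x) := by
  rw [fderiv_EL_apply L hL]
  have h0 : ∀ i, fderiv ℝ (fun y => pdp L y i) x (ReebL L Winv x) = 0 :=
    Dp_reeb L Winv x hW
  rw [fderiv_eval L x (ReebL L Winv x)]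
  simp only [h0, mul_zero, zero_add]
  simp only [ReebL, Pi.zero_apply, zero_mul, Finset.sum_const_zero, one_mul, zero_add]
  have hc : ∑ i, pdp L x i * -(∑ j, Winv x i j * WS L x j)
      = ∑ i, -(∑ j, Winv x i j * WS L x j) * pdp L x i :=
    Finset.sum_congr rfl fun i _ => mul_comm _ _
  rw [hc]; ring

noncomputable def qcoordL (i : Fin n) : Pt n →L[ℝ] ℝ :=
  (ContinuousLinearMap.proj i).comp
    (ContinuousLinearMap.fst ℝ (Fin n → ℝ) ((Fin n → ℝ) × ℝ))

noncomputable def Scoord : Pt n →L[ℝ] ℝ :=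
  (ContinuousLinearMap.snd ℝ (Fin n → ℝ) ℝ).comp
    (ContinuousLinearMap.snd ℝ (Fin n → ℝ) ((Fin n → ℝ) × ℝ))


/-- A curve (q(t), q̇(t), S(t)) is an integral curve of the Lagrangian
    evolution vector field Γ_L — the vector field determined by
    ♭_L(Γ_L) = dE_L - (𝓡_L E_L) η_L, where ♭_L(X) = i_X dη_L + η_L(X) η_L —
    if and only if it satisfies the second-order condition dqⁱ/dt = q̇ⁱ
    together with the thermodynamic Herglotz equations
    d/dt(∂L/∂q̇ⁱ) - ∂L/∂qⁱ = (∂L/∂q̇ⁱ)(∂L/∂S)  and  Ṡ = q̇ⁱ ∂L/∂q̇ⁱ. -/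
theorem integral_curve_iff_herglotz {n : ℕ} (L : Pt n → ℝ) (hL : ContDiff ℝ (⊤ : ℕ∞) L)
    (Winv : Pt n → Matrix (Fin n) (Fin n) ℝ)
    (hWinv : ∀ x, Wmat L x * Winv x = 1 ∧ Winv x * Wmat L x = 1)
    (Γ : Pt n → Pt n)
    (hΓ : ∀ x v : Pt n,
      detaL L x (Γ x) v + etaLv L x (Γ x) * etaLv L x v
        = fderiv ℝ (EL L) x v - fderiv ℝ (EL L) x (ReebL L Winv x) * etaLv L x v)
    (c : ℝ → Pt n) (hc : Differentiable ℝ c) :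
    (∀ t : ℝ, HasDerivAt c (Γ (c t)) t)
      ↔ (∀ t : ℝ,
          (∀ i, deriv (fun s => (c s).1 i) t = (c t).2.1 i) ∧
          (∀ i, deriv (fun s => pdp L (c s) i) t - pdq L (c t) i
                  = pdp L (c t) i * pdS L (c t)) ∧
          deriv (fun s => (c s).2.2) t = ∑ i, (c t).2.1 i * pdp L (c t) i) := by
  have hG : ∀ x v : Pt n,
      detaL L x (Γ x) v + etaLv L x (Γ x) * etaLv L x v
        = fderiv ℝ (EL L) x v + pdS L x * etaLv L x v := by
    intro x v
    have h := hΓ x v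
    rw [fderiv_EL_reeb L hL Winv x (hWinv x).1] at h
    linarith [h]
  -- component 1: (Γ x).1 = x.2.1
  have hG1 : ∀ x : Pt n, (Γ x).1 = x.2.1 := by
    intro x
    have key : ∀ j, ∑ i, ((Γ x).1 i - x.2.1 i) * Wmat L x i j = 0 := by
      intro j
      have h := hG x ((0, Pi.single j 1, 0) : Pt n)
      rw [fderiv_EL_apply L hL] at h
      have hLj : (fderiv ℝ L x) ((0, Pi.single j 1, 0) : Pt n) = pdp L x j := rfl
      simp only [detaL, etaLv, Wmat] at h ⊢
      simp only [Pi.zero_apply, mul_zero, sub_zero, zero_sub, neg_zero, mul_neg,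
        Finset.sum_const_zero, add_zero, zero_mul, hLj] at h
      rw [Finset.sum_add_distrib] at h
      simp only [Pi.single_apply, mul_ite, mul_one, mul_zero, Finset.sum_ite_eq',
        Finset.mem_univ, if_true] at h
      simp only [sub_mul, Finset.sum_sub_distrib]
      linarith [h]
    have h0 := row_cancel (Wmat L x) (Winv x) (hWinv x).1 _ key
    funext k
    have := congrFun h0 k
    simpa [sub_eq_zero] using this
  -- component 3 (S): (Γ x).2.2 = ∑ pᵢ q̇ⁱ
  have hG2 : ∀ x : Pt n, (Γ x).2.2 = ∑ i, pdp L x i * x.2.1 i := by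
    intro x
    have h := hG x ((0, 0, 1) : Pt n)
    rw [fderiv_EL_apply L hL] at h
    have hLS : (fderiv ℝ L x) ((0, 0, 1) : Pt n) = pdS L x := rfl
    simp only [detaL, etaLv] at h
    simp only [Pi.zero_apply, mul_zero, sub_zero, zero_sub, neg_zero, mul_neg,
      Finset.sum_const_zero, add_zero, zero_mul, mul_one, hLS, hG1 x] at h
    linarith [h]
  have hetaz : ∀ x : Pt n, (Γ x).2.2 - ∑ i, pdp L x i * (Γ x).1 i = 0 := by
    intro x; rw [hG1 x, hG2 x]; exact sub_self _
  -- component 2: the force equation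
  have hG3 : ∀ (x : Pt n) (j : Fin n),
      fderiv ℝ (fun y => pdp L y j) x (Γ x) = pdq L x j + pdp L x j * pdS L x := by
    intro x j
    have h := hG x ((Pi.single j 1, 0, 0) : Pt n)
    rw [fderiv_EL_apply L hL] at h
    have hLq : (fderiv ℝ L x) ((Pi.single j 1, 0, 0) : Pt n) = pdq L x j := rfl
    simp only [detaL, etaLv] at h
    rw [show ((Γ x).2.2 - ∑ i, pdp L x i * (Γ x).1 i) = 0 from hetaz x] at h
    simp only [Pi.zero_apply, mul_zero, sub_zero, zero_sub, neg_zero, mul_neg,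
      Finset.sum_const_zero, add_zero, zero_mul, zero_add, hLq, hG1 x] at h
    rw [Finset.sum_sub_distrib] at h
    simp only [Pi.single_apply, mul_ite, ite_mul, mul_one, one_mul, mul_zero, zero_mul,
      Finset.sum_ite_eq', Finset.mem_univ, if_true] at h
    linarith [h]
  constructor
  · intro H t
    have hct := H t
    refine ⟨fun i => ?_, fun i => ?_, ?_⟩
    · have h2 : deriv (fun s => (c s).1 i) t = (Γ (c t)).1 i :=
        HasDerivAt.deriv ((qcoordL i).hasFDerivAt.comp_hasDerivAt t hct)
      rw [h2]; exact congrFun (hG1 (c t)) i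
    · have hpd : HasDerivAt (fun s => pdp L (c s) i)
          (fderiv ℝ (fun y => pdp L y i) (c t) (Γ (c t))) t :=
        (((contDiff_pdp L hL i).differentiable (by simp) (c t)).hasFDerivAt).comp_hasDerivAt t hct
      rw [hpd.deriv, hG3 (c t) i]; ring
    · have h2 : deriv (fun s => (c s).2.2) t = (Γ (c t)).2.2 :=
        HasDerivAt.deriv (Scoord.hasFDerivAt.comp_hasDerivAt t hct)
      rw [h2, hG2 (c t)]
      exact Finset.sum_congr rfl fun i _ => mul_comm _ _
  · intro H t
    have hct := (hc t).hasDerivAt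
    obtain ⟨h1, h2, h3⟩ := H t
    have hu1 : ∀ i, (deriv c t).1 i = (c t).2.1 i := by
      intro i
      rw [← h1 i]
      exact (HasDerivAt.deriv ((qcoordL i).hasFDerivAt.comp_hasDerivAt t hct)).symm
    have hu3 : (deriv c t).2.2 = ∑ i, (c t).2.1 i * pdp L (c t) i := by
      rw [← h3]
      exact (HasDerivAt.deriv (Scoord.hasFDerivAt.comp_hasDerivAt t hct)).symm
    have hDp : ∀ i, fderiv ℝ (fun y => pdp L y i) (c t) (deriv c t)
        = fderiv ℝ (fun y => pdp L y i) (c t) (Γ (c t)) := by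
      intro i
      have hpd : HasDerivAt (fun s => pdp L (c s) i)
          (fderiv ℝ (fun y => pdp L y i) (c t) (deriv c t)) t :=
        (((contDiff_pdp L hL i).differentiable (by simp) (c t)).hasFDerivAt).comp_hasDerivAt t hct
      rw [hG3 (c t) i, ← hpd.deriv]
      linarith [h2 i]
    have hfst : (deriv c t).1 = (Γ (c t)).1 := by
      rw [hG1]; funext i; exact hu1 i
    have hS : (deriv c t).2.2 = (Γ (c t)).2.2 := by
      rw [hG2, hu3]
      exact Finset.sum_congr rfl fun i _ => mul_comm _ _
    have hsnd1 : (deriv c t).2.1 = (Γ (c t)).2.1 := by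
      have hz : ∀ i, ∑ j, Wmat L (c t) i j
          * ((deriv c t).2.1 j - (Γ (c t)).2.1 j) = 0 := by
        intro i
        have heq := hDp i
        rw [fderiv_eval (fun y => pdp L y i) (c t) (deriv c t),
            fderiv_eval (fun y => pdp L y i) (c t) (Γ (c t)), hfst, hS] at heq
        have hcan : ∑ j, (deriv c t).2.1 j * pdp (fun y => pdp L y i) (c t) j
            = ∑ j, (Γ (c t)).2.1 j * pdp (fun y => pdp L y i) (c t) j := by
          linarith [heq]
        have hw : ∀ j, Wmat L (c t) i j = pdp (fun y => pdp L y i) (c t) j :=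
          fun j => rfl
        calc ∑ j, Wmat L (c t) i j * ((deriv c t).2.1 j - (Γ (c t)).2.1 j)
            = ∑ j, ((deriv c t).2.1 j * pdp (fun y => pdp L y i) (c t) j
                - (Γ (c t)).2.1 j * pdp (fun y => pdp L y i) (c t) j) := by
              refine Finset.sum_congr rfl fun j _ => ?_
              rw [hw j]; ring
          _ = 0 := by rw [Finset.sum_sub_distrib, hcan, sub_self]
      have h0 := col_cancel (Wmat L (c t)) (Winv (c t)) (hWinv (c t)).2 _ hz
      funext k
      have := congrFun h0 k
      simpa [sub_eq_zero] using this
    have hveq : deriv c t = Γ (c t) := Prod.ext hfst (Prod.ext hsnd1 hS)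
    rw [← hveq]
    exact hct
end
end

section
/- Every integral curve of 𝓔_H satisfies the second law dS/dt ≥ 0 at all points if and only if Δ_Q(H) = p_i ∂H/∂p_i ≥ 0 everywhere; in particular, for H(q,p,S) = ½ g^{ij} p_i p_j + V(q,S) with g a symmetric bilinear form, this holds for all curves iff g is positive semidefinite. -/
/- Canonical (Darboux) model of a contact manifold: ℝ^{2n+1} with coordinates
   (q, p, S), contact form η = dS - pᵢ dqⁱ.  The evolution vector field of f is
   𝓔_f = ♯_Λ(df), with components (∂f/∂pᵢ, -(∂f/∂qⁱ + pᵢ ∂f/∂S), pᵢ ∂f/∂pᵢ). -/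

noncomputable section

/-- The evolution vector field 𝓔_H in canonical coordinates. -/
noncomputable def evolH {n : ℕ} (H : Pt n → ℝ) (x : Pt n) : Pt n :=
  (fun i => pdp H x i,
   fun i => -(pdq H x i + x.2.1 i * pdS H x),
   ∑ i, x.2.1 i * pdp H x i)


section SecondLawAux

private lemma slaw_key {n : ℕ} (H : Pt n → ℝ) :
    (∀ (c : ℝ → Pt n) (t : ℝ), HasDerivAt c (evolH H (c t)) t →
        deriv (fun s => (c s).2.2) t ≥ 0)
      ↔ (∀ x : Pt n, (∑ i, x.2.1 i * pdp H x i) ≥ 0) := by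
  constructor
  · intro h x
    set c : ℝ → Pt n := fun s => x + s • evolH H x with hcdef
    have hc : HasDerivAt c (evolH H (c 0)) 0 := by
      have : HasDerivAt c (evolH H x) 0 := by
        simpa only [id, one_smul] using ((hasDerivAt_id (0:ℝ)).smul_const (evolH H x)).const_add x
      simpa [hcdef] using this
    have h2 := h c 0 hc
    have h3 : HasDerivAt (fun s => (c s).2.2)
        ((ContinuousLinearMap.snd ℝ (Fin n → ℝ) ℝ).comp
          (ContinuousLinearMap.snd ℝ (Fin n → ℝ) ((Fin n → ℝ) × ℝ)) (evolH H (c 0))) 0 :=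
      (((ContinuousLinearMap.snd ℝ (Fin n → ℝ) ℝ).comp
          (ContinuousLinearMap.snd ℝ (Fin n → ℝ) ((Fin n → ℝ) × ℝ))).hasFDerivAt.comp_hasDerivAt 0 hc)
    rw [h3.deriv] at h2
    simpa [hcdef, evolH, Prod.mk_zero_zero] using h2
  · intro h c t hc
    have h3 : HasDerivAt (fun s => (c s).2.2)
        ((ContinuousLinearMap.snd ℝ (Fin n → ℝ) ℝ).comp
          (ContinuousLinearMap.snd ℝ (Fin n → ℝ) ((Fin n → ℝ) × ℝ)) (evolH H (c t))) t :=
      (((ContinuousLinearMap.snd ℝ (Fin n → ℝ) ℝ).comp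
          (ContinuousLinearMap.snd ℝ (Fin n → ℝ) ((Fin n → ℝ) × ℝ))).hasFDerivAt.comp_hasDerivAt t hc)
    rw [h3.deriv]
    simpa [evolH] using h (c t)

private def slawPi {n : ℕ} (i : Fin n) : Pt n →L[ℝ] ℝ :=
  (ContinuousLinearMap.proj i).comp ((ContinuousLinearMap.fst ℝ (Fin n → ℝ) ℝ).comp
    (ContinuousLinearMap.snd ℝ (Fin n → ℝ) ((Fin n → ℝ) × ℝ)))

private def slawPhi {n : ℕ} : Pt n →L[ℝ] (Fin n → ℝ) × ℝ :=
  (ContinuousLinearMap.fst ℝ (Fin n → ℝ) ((Fin n → ℝ) × ℝ)).prod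
    ((ContinuousLinearMap.snd ℝ (Fin n → ℝ) ℝ).comp
      (ContinuousLinearMap.snd ℝ (Fin n → ℝ) ((Fin n → ℝ) × ℝ)))

private lemma slaw_hasFDerivAt_H {n : ℕ} (g : Matrix (Fin n) (Fin n) ℝ)
    (V : (Fin n → ℝ) × ℝ → ℝ) (hV : ContDiff ℝ (⊤ : ℕ∞) V) (x : Pt n) :
    HasFDerivAt (fun x : Pt n => (1/2) * ∑ i, ∑ j, g i j * x.2.1 i * x.2.1 j
        + V (x.1, x.2.2))
      ((1/2 : ℝ) • (∑ i, ∑ j, ((g i j * x.2.1 i) • slawPi j + x.2.1 j • (g i j) • slawPi i))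
        + (fderiv ℝ V (x.1, x.2.2)).comp slawPhi) x := by
  have hquad : HasFDerivAt (fun x : Pt n => (1/2) * ∑ i, ∑ j, g i j * x.2.1 i * x.2.1 j)
      ((1/2 : ℝ) • (∑ i, ∑ j, ((g i j * x.2.1 i) • slawPi j + x.2.1 j • (g i j) • slawPi i))) x := by
    have : HasFDerivAt (fun x : Pt n => ∑ i, ∑ j, g i j * x.2.1 i * x.2.1 j)
        (∑ i, ∑ j, ((g i j * x.2.1 i) • slawPi j + x.2.1 j • (g i j) • slawPi i)) x := by
      apply HasFDerivAt.fun_sum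
      intro i _
      apply HasFDerivAt.fun_sum
      intro j _
      have h1 : HasFDerivAt (fun x : Pt n => x.2.1 i) (slawPi i) x := (slawPi i).hasFDerivAt
      have h2 : HasFDerivAt (fun x : Pt n => x.2.1 j) (slawPi j) x := (slawPi j).hasFDerivAt
      exact (h1.const_mul (g i j)).mul h2
    exact this.const_mul (1/2)
  have hVd : HasFDerivAt (fun x : Pt n => V (x.1, x.2.2))
      ((fderiv ℝ V (x.1, x.2.2)).comp slawPhi) x := by
    have := (hV.differentiable (by simp) ((x.1, x.2.2) : (Fin n → ℝ) × ℝ)).hasFDerivAt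
    exact this.comp x (slawPhi.hasFDerivAt (x := x))
  exact hquad.add hVd

private lemma slaw_pdp_H {n : ℕ} (g : Matrix (Fin n) (Fin n) ℝ) (V : (Fin n → ℝ) × ℝ → ℝ)
    (hV : ContDiff ℝ (⊤ : ℕ∞) V) (x : Pt n) (k : Fin n) :
    pdp (fun x : Pt n => (1/2) * ∑ i, ∑ j, g i j * x.2.1 i * x.2.1 j + V (x.1, x.2.2)) x k
      = (1/2) * ∑ i, ∑ j, ((g i j * x.2.1 i) * ((Pi.single k 1 : Fin n → ℝ) j)
          + x.2.1 j * (g i j * (Pi.single k 1 : Fin n → ℝ) i)) := by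
  rw [pdp, (slaw_hasFDerivAt_H g V hV x).fderiv]
  simp [slawPi, slawPhi, ContinuousLinearMap.sum_apply, Pi.single_apply, mul_comm, Prod.mk_zero_zero]

private lemma slaw_alg {n : ℕ} (g : Matrix (Fin n) (Fin n) ℝ) (hg : g.IsSymm) (p : Fin n → ℝ) :
    ∑ k, p k * ((1/2) * ∑ i, ∑ j, ((g i j * p i) * ((Pi.single k 1 : Fin n → ℝ) j)
          + p j * (g i j * (Pi.single k 1 : Fin n → ℝ) i)))
      = dotProduct p (g.mulVec p) := by
  have hsum : ∀ k, ∑ i, ∑ j, ((g i j * p i) * ((Pi.single k 1 : Fin n → ℝ) j)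
          + p j * (g i j * (Pi.single k 1 : Fin n → ℝ) i))
      = (∑ i, g i k * p i) + ∑ j, p j * g k j := by
    intro k
    simp [Pi.single_apply, mul_ite, mul_one, mul_zero, Finset.sum_ite_irrel,
      Finset.sum_ite_eq', Finset.sum_add_distrib, Finset.sum_const_zero]
  have h2 : ∀ k, (∑ i, g i k * p i) = ∑ j, g k j * p j :=
    fun k => Finset.sum_congr rfl fun i _ => by rw [hg.apply]
  calc ∑ k, p k * ((1/2) * ∑ i, ∑ j, ((g i j * p i) * ((Pi.single k 1 : Fin n → ℝ) j)
          + p j * (g i j * (Pi.single k 1 : Fin n → ℝ) i)))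
      = ∑ k, p k * (∑ j, g k j * p j) := by
        refine Finset.sum_congr rfl fun k _ => ?_
        rw [hsum k, h2 k]
        ring_nf
        rw [Finset.sum_congr rfl (fun j _ => mul_comm (p j) (g k j))]
        ring
    _ = dotProduct p (g.mulVec p) := by
        simp [dotProduct, Matrix.mulVec]

private lemma slaw_sum_pdp {n : ℕ} (g : Matrix (Fin n) (Fin n) ℝ) (hg : g.IsSymm)
    (V : (Fin n → ℝ) × ℝ → ℝ) (hV : ContDiff ℝ (⊤ : ℕ∞) V) (x : Pt n) :
    ∑ k, x.2.1 k * pdp (fun x : Pt n => (1/2) * ∑ i, ∑ j, g i j * x.2.1 i * x.2.1 j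
        + V (x.1, x.2.2)) x k
      = dotProduct x.2.1 (g.mulVec x.2.1) := by
  simp only [slaw_pdp_H g V hV x]
  exact slaw_alg g hg x.2.1

end SecondLawAux

/-- Every integral curve of 𝓔_H satisfies the second law dS/dt ≥ 0 at all
    points if and only if Δ_Q(H) = pᵢ ∂H/∂pᵢ ≥ 0 everywhere.  In particular,
    for H(q,p,S) = ½ gⁱʲ pᵢ pⱼ + V(q,S) with g symmetric, this holds for all
    curves iff g is positive semidefinite. -/
theorem second_law_iff {n : ℕ} :
    (∀ (H : Pt n → ℝ), ContDiff ℝ (⊤ : ℕ∞) H →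
      ((∀ (c : ℝ → Pt n) (t : ℝ), HasDerivAt c (evolH H (c t)) t →
          deriv (fun s => (c s).2.2) t ≥ 0)
        ↔ (∀ x : Pt n, (∑ i, x.2.1 i * pdp H x i) ≥ 0))) ∧
    (∀ (g : Matrix (Fin n) (Fin n) ℝ), g.IsSymm → ∀ (V : (Fin n → ℝ) × ℝ → ℝ),
      ContDiff ℝ (⊤ : ℕ∞) V →
      ((∀ (c : ℝ → Pt n) (t : ℝ),
          HasDerivAt c
            (evolH (fun x => (1/2) * ∑ i, ∑ j, g i j * x.2.1 i * x.2.1 j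
                              + V (x.1, x.2.2)) (c t)) t →
          deriv (fun s => (c s).2.2) t ≥ 0)
        ↔ g.PosSemidef)) := by
  constructor
  · intro H _
    exact slaw_key H
  · intro g hg V hV
    rw [slaw_key]
    constructor
    · intro h
      refine ⟨?_, ?_⟩
      · ext i j
        rw [Matrix.conjTranspose_apply, star_trivial]
        exact hg.apply i j
      · intro v
        have hv := h ((0, v, 0) : Pt n)
        rw [slaw_sum_pdp g hg V hV] at hv
        simpa [Finsupp.sum_fintype, dotProduct, Matrix.mulVec, Finset.mul_sum, mul_assoc] using hv
    · intro hpsd x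
      rw [slaw_sum_pdp g hg V hV]
      simpa using hpsd.dotProduct_mulVec_nonneg x.2.1
end
end

section
/- For the composed two-system Hamiltonian dynamics q̇_α = ∂H/∂p_α, ṗ_α = -∂H/∂q_α (α = 1,2), Ṡ₁ = K·T₂, Ṡ₂ = -K·T₁, where K = k(1/T₁ - 1/T₂) and T_α = ∂H/∂S_α > 0, the total energy H is constant along solutions and the total entropy satisfies d(S₁+S₂)/dt = k(T₂-T₁)²/(T₁T₂) ≥ 0. -/
noncomputable section

/-- Phase space of a composed thermodynamic system:
    (q₁, p₁, S₁) × (q₂, p₂, S₂). -/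
abbrev Pt2 (n₁ n₂ : ℕ) :=
  ((Fin n₁ → ℝ) × (Fin n₁ → ℝ) × ℝ) × ((Fin n₂ → ℝ) × (Fin n₂ → ℝ) × ℝ)

variable {n₁ n₂ : ℕ}

noncomputable def dq1 (H : Pt2 n₁ n₂ → ℝ) (x : Pt2 n₁ n₂) (i : Fin n₁) : ℝ :=
  fderiv ℝ H x (((Pi.single i 1, 0, 0), 0) : Pt2 n₁ n₂)
noncomputable def dp1 (H : Pt2 n₁ n₂ → ℝ) (x : Pt2 n₁ n₂) (i : Fin n₁) : ℝ :=
  fderiv ℝ H x (((0, Pi.single i 1, 0), 0) : Pt2 n₁ n₂)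
/-- T₁ = ∂H/∂S₁. -/
noncomputable def T1 (H : Pt2 n₁ n₂ → ℝ) (x : Pt2 n₁ n₂) : ℝ :=
  fderiv ℝ H x (((0, 0, 1), 0) : Pt2 n₁ n₂)
noncomputable def dq2 (H : Pt2 n₁ n₂ → ℝ) (x : Pt2 n₁ n₂) (i : Fin n₂) : ℝ :=
  fderiv ℝ H x ((0, (Pi.single i 1, 0, 0)) : Pt2 n₁ n₂)
noncomputable def dp2 (H : Pt2 n₁ n₂ → ℝ) (x : Pt2 n₁ n₂) (i : Fin n₂) : ℝ :=
  fderiv ℝ H x ((0, (0, Pi.single i 1, 0)) : Pt2 n₁ n₂)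
/-- T₂ = ∂H/∂S₂. -/
noncomputable def T2 (H : Pt2 n₁ n₂ → ℝ) (x : Pt2 n₁ n₂) : ℝ :=
  fderiv ℝ H x ((0, (0, 0, 1)) : Pt2 n₁ n₂)

/-- The Fourier factor K = k(1/T₁ - 1/T₂). -/
noncomputable def Kf (k : ℝ) (H : Pt2 n₁ n₂ → ℝ) (x : Pt2 n₁ n₂) : ℝ :=
  k * (1 / T1 H x - 1 / T2 H x)

/-- The evolution vector field 𝓔_{H,K} = ♯_{Λ_K}(dH) of the composed system:
    q̇_α = ∂H/∂p_α, ṗ_α = -∂H/∂q_α, Ṡ₁ = K·T₂, Ṡ₂ = -K·T₁. -/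
noncomputable def evolHK (k : ℝ) (H : Pt2 n₁ n₂ → ℝ) (x : Pt2 n₁ n₂) : Pt2 n₁ n₂ :=
  ((fun i => dp1 H x i, fun i => -dq1 H x i, Kf k H x * T2 H x),
   (fun i => dp2 H x i, fun i => -dq2 H x i, -(Kf k H x * T1 H x)))

lemma clm_expand {n₁ n₂ : ℕ} (L : Pt2 n₁ n₂ →L[ℝ] ℝ) (v : Pt2 n₁ n₂) :
    L v = (∑ i, v.1.1 i * L (((Pi.single i 1, 0, 0), 0) : Pt2 n₁ n₂))
        + (∑ i, v.1.2.1 i * L (((0, Pi.single i 1, 0), 0) : Pt2 n₁ n₂))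
        + v.1.2.2 * L (((0, 0, 1), 0) : Pt2 n₁ n₂)
        + (∑ i, v.2.1 i * L ((0, (Pi.single i 1, 0, 0)) : Pt2 n₁ n₂))
        + (∑ i, v.2.2.1 i * L ((0, (0, Pi.single i 1, 0)) : Pt2 n₁ n₂))
        + v.2.2.2 * L ((0, (0, 0, 1)) : Pt2 n₁ n₂) := by
  have hv : v = (∑ i, v.1.1 i • (((Pi.single i 1, 0, 0), 0) : Pt2 n₁ n₂))
        + (∑ i, v.1.2.1 i • (((0, Pi.single i 1, 0), 0) : Pt2 n₁ n₂))
        + v.1.2.2 • (((0, 0, 1), 0) : Pt2 n₁ n₂)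
        + (∑ i, v.2.1 i • ((0, (Pi.single i 1, 0, 0)) : Pt2 n₁ n₂))
        + (∑ i, v.2.2.1 i • ((0, (0, Pi.single i 1, 0)) : Pt2 n₁ n₂))
        + v.2.2.2 • ((0, (0, 0, 1)) : Pt2 n₁ n₂) := by
    ext j <;>
      simp [Prod.fst_sum, Prod.snd_sum, Finset.sum_apply, Pi.single_apply,
        Finset.sum_ite_eq', mul_comm]
  conv_lhs => rw [hv]
  simp only [map_add, map_sum, map_smul, smul_eq_mul]

lemma fderiv_expand {n₁ n₂ : ℕ} (H : Pt2 n₁ n₂ → ℝ) (x : Pt2 n₁ n₂) (v : Pt2 n₁ n₂) :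
    fderiv ℝ H x v
      = (∑ i, v.1.1 i * dq1 H x i) + (∑ i, v.1.2.1 i * dp1 H x i) + v.1.2.2 * T1 H x
      + (∑ i, v.2.1 i * dq2 H x i) + (∑ i, v.2.2.1 i * dp2 H x i) + v.2.2.2 * T2 H x :=
  clm_expand _ _

lemma evol_zero {n₁ n₂ : ℕ} (H : Pt2 n₁ n₂ → ℝ) (k : ℝ) (x : Pt2 n₁ n₂) :
    fderiv ℝ H x (evolHK k H x) = 0 := by
  rw [fderiv_expand]
  simp only [evolHK]
  have e1 : (∑ i, -dq1 H x i * dp1 H x i) = -∑ i, dp1 H x i * dq1 H x i := by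
    rw [← Finset.sum_neg_distrib]; exact Finset.sum_congr rfl fun i _ => by ring
  have e2 : (∑ i, -dq2 H x i * dp2 H x i) = -∑ i, dp2 H x i * dq2 H x i := by
    rw [← Finset.sum_neg_distrib]; exact Finset.sum_congr rfl fun i _ => by ring
  rw [e1, e2]; ring

/-- For the composed two-system dynamics the total energy H is constant along
    solutions and the total entropy S₁ + S₂ satisfies
    d(S₁+S₂)/dt = k(T₂-T₁)²/(T₁T₂) ≥ 0. -/
theorem composed_system_laws (H : Pt2 n₁ n₂ → ℝ) (hH : ContDiff ℝ (⊤ : ℕ∞) H)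
    (k : ℝ) (hk : 0 ≤ k)
    (hT : ∀ x, 0 < T1 H x ∧ 0 < T2 H x)
    (c : ℝ → Pt2 n₁ n₂) (hc : ∀ t, HasDerivAt c (evolHK k H (c t)) t) :
    (∀ t : ℝ, H (c t) = H (c 0)) ∧
    (∀ t : ℝ,
      deriv (fun s => (c s).1.2.2 + (c s).2.2.2) t
        = k * (T2 H (c t) - T1 H (c t)) ^ 2 / (T1 H (c t) * T2 H (c t)) ∧
      0 ≤ deriv (fun s => (c s).1.2.2 + (c s).2.2.2) t) := by
  have hdiff := hH.differentiable (by simp)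
  have hHc : ∀ t, HasDerivAt (fun s => H (c s)) (fderiv ℝ H (c t) (evolHK k H (c t))) t :=
    fun t => ((hdiff (c t)).hasFDerivAt.comp_hasDerivAt t (hc t))
  constructor
  · intro t
    exact is_const_of_deriv_eq_zero
      (fun s => (hHc s).differentiableAt)
      (fun s => by rw [(hHc s).deriv, evol_zero]) t 0
  · intro t
    obtain ⟨h1, h2⟩ := hT (c t)
    set P : Pt2 n₁ n₂ →L[ℝ] ℝ :=
      (ContinuousLinearMap.snd ℝ (Fin n₁ → ℝ) ℝ).comp
        ((ContinuousLinearMap.snd ℝ (Fin n₁ → ℝ) ((Fin n₁ → ℝ) × ℝ)).comp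
          (ContinuousLinearMap.fst ℝ _ _)) +
      (ContinuousLinearMap.snd ℝ (Fin n₂ → ℝ) ℝ).comp
        ((ContinuousLinearMap.snd ℝ (Fin n₂ → ℝ) ((Fin n₂ → ℝ) × ℝ)).comp
          (ContinuousLinearMap.snd ℝ _ _)) with hP
    have hS : HasDerivAt (fun s => (c s).1.2.2 + (c s).2.2.2)
        ((evolHK k H (c t)).1.2.2 + (evolHK k H (c t)).2.2.2) t := by
      have := P.hasFDerivAt.comp_hasDerivAt t (hc t)
      exact this
    have hv : deriv (fun s => (c s).1.2.2 + (c s).2.2.2) t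
        = k * (T2 H (c t) - T1 H (c t)) ^ 2 / (T1 H (c t) * T2 H (c t)) := by
      rw [hS.deriv]
      simp only [evolHK, Kf]
      field_simp
      ring
    refine ⟨hv, ?_⟩
    rw [hv]
    apply div_nonneg (by positivity) (le_of_lt (mul_pos h1 h2))
end
end
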